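/- Let d ≥ 1. For all measurable f, g : ℝ^d → ℂ one has the duality inequality ∫_{ℝ^d} |f(x)·g(x)| dx ≤ ‖f‖_{B*}·‖g‖_B; in particular, if ‖f‖_{B*} and ‖g‖_B are finite then the product f̄·g is integrable. -/

import Mathlib

open MeasureTheory

/-- The dyadic annulus `c_j = {x : 2^{j−1} < ‖x‖ ≤ 2^j}` in `ℝ^d`. -/
def annulus (d : ℕ) (j : ℤ) : Set (EuclideanSpace ℝ (Fin d)) :=
  {x | (2 : ℝ) ^ (j - 1) < ‖x‖ ∧ ‖x‖ ≤ (2 : ℝ) ^ j}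

/-- The unit ball `c = {x : ‖x‖ ≤ 1}` in `ℝ^d`. -/
def unitBall (d : ℕ) : Set (EuclideanSpace ℝ (Fin d)) := {x | ‖x‖ ≤ 1}

/-- The Besov-type norm `‖f‖_B = ‖f‖_{L²(c)} + Σ_{j≥1} 2^{j/2}‖f‖_{L²(c_j)}`. -/
noncomputable def BNorm (d : ℕ) (f : EuclideanSpace ℝ (Fin d) → ℂ) : ENNReal :=
  eLpNorm f 2 (volume.restrict (unitBall d)) +
    ∑' j : ℕ, (2 : ENNReal) ^ (((j : ℝ) + 1) / 2) *
      eLpNorm f 2 (volume.restrict (annulus d ((j : ℤ) + 1)))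

/-- The dual norm `‖f‖_{B*} = max(‖f‖_{L²(c)}, sup_{j≥1} 2^{−j/2}‖f‖_{L²(c_j)})`. -/
noncomputable def BStarNorm (d : ℕ) (f : EuclideanSpace ℝ (Fin d) → ℂ) : ENNReal :=
  max (eLpNorm f 2 (volume.restrict (unitBall d)))
    (⨆ j : ℕ, (2 : ENNReal) ^ (-(((j : ℝ) + 1) / 2)) *
      eLpNorm f 2 (volume.restrict (annulus d ((j : ℤ) + 1))))

lemma annulus_eq (d : ℕ) (j : ℕ) :
    annulus d ((j : ℤ) + 1) =
      {x : EuclideanSpace ℝ (Fin d) | (2:ℝ)^j < ‖x‖ ∧ ‖x‖ ≤ (2:ℝ)^(j+1)} := by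
  ext x
  simp only [annulus, Set.mem_setOf_eq, add_sub_cancel_right]
  rw [zpow_natCast, show ((j:ℤ)+1) = ((j+1 : ℕ) : ℤ) by push_cast; ring, zpow_natCast]

lemma compl_ball_eq (d : ℕ) :
    (unitBall d)ᶜ = ⋃ j : ℕ, annulus d ((j : ℤ) + 1) := by
  ext x
  simp only [unitBall, Set.mem_compl_iff, Set.mem_setOf_eq, not_le, Set.mem_iUnion, annulus_eq]
  constructor
  · intro hx
    have hex : ∃ n : ℕ, ‖x‖ ≤ 2 ^ (n + 1) := by
      obtain ⟨n, hn⟩ := pow_unbounded_of_one_lt ‖x‖ (one_lt_two (α := ℝ))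
      exact ⟨n, le_of_lt (hn.trans_le (pow_le_pow_right₀ one_le_two (Nat.le_succ n)))⟩
    classical
    refine ⟨Nat.find hex, ?_, Nat.find_spec hex⟩
    rcases Nat.eq_zero_or_pos (Nat.find hex) with h0 | h0
    · simpa [h0] using hx
    · have hlt : Nat.find hex - 1 < Nat.find hex := Nat.sub_lt h0 one_pos
      have h1 : Nat.find hex - 1 + 1 = Nat.find hex := Nat.succ_pred_eq_of_pos h0
      refine lt_of_not_ge fun hc => Nat.find_min hex hlt ?_
      rw [h1]
      exact hc
  · rintro ⟨j, hj, -⟩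
    exact lt_of_le_of_lt (one_le_pow₀ (one_le_two (α := ℝ))) hj

lemma annulus_disjoint (d : ℕ) :
    Pairwise (Function.onFun Disjoint fun j : ℕ => annulus d ((j : ℤ) + 1)) := by
  have key : ∀ i j : ℕ, i < j →
      Disjoint (annulus d ((i:ℤ)+1)) (annulus d ((j:ℤ)+1)) := by
    intro i j hij
    rw [Set.disjoint_left]
    intro x hxi hxj
    rw [annulus_eq] at hxi hxj
    have : (2:ℝ)^(i+1) ≤ 2^j := pow_le_pow_right₀ one_le_two hij
    exact absurd (hxi.2.trans this) (not_le.mpr hxj.1)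
  intro i j hij
  rcases hij.lt_or_gt with h | h
  · exact key i j h
  · exact (key j i h).symm

lemma cs {α : Type*} [MeasurableSpace α] (μ : Measure α) (f g : α → ℂ)
    (hf : Measurable f) (hg : Measurable g) :
    ∫⁻ x, (‖f x‖₊ : ENNReal) * (‖g x‖₊ : ENNReal) ∂μ ≤ eLpNorm f 2 μ * eLpNorm g 2 μ := by
  have hpq : Real.HolderConjugate 2 2 := Real.HolderConjugate.two_two
  have h := ENNReal.lintegral_mul_le_Lp_mul_Lq μ hpq
    (hf.nnnorm.coe_nnreal_ennreal.aemeasurable) (hg.nnnorm.coe_nnreal_ennreal.aemeasurable)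
  rw [eLpNorm_eq_lintegral_rpow_enorm_toReal (by norm_num) (by norm_num),
      eLpNorm_eq_lintegral_rpow_enorm_toReal (by norm_num) (by norm_num)]
  simpa [enorm_eq_nnnorm] using h

/-- Duality inequality: `∫ |f·g| ≤ ‖f‖_{B*}·‖g‖_B`. -/
theorem B_duality (d : ℕ) (hd : 1 ≤ d) (f g : EuclideanSpace ℝ (Fin d) → ℂ)
    (hf : Measurable f) (hg : Measurable g) :
    ∫⁻ x, (‖f x‖₊ : ENNReal) * (‖g x‖₊ : ENNReal) ≤ BStarNorm d f * BNorm d g := by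
  set F : EuclideanSpace ℝ (Fin d) → ENNReal := fun x => (‖f x‖₊ : ENNReal) * ‖g x‖₊ with hF
  have hball : MeasurableSet (unitBall d) := measurableSet_le measurable_norm measurable_const
  have hann : ∀ j : ℕ, MeasurableSet (annulus d ((j:ℤ)+1)) := fun j =>
    (measurableSet_lt measurable_const measurable_norm).inter
      (measurableSet_le measurable_norm measurable_const)
  have hsplit : ∫⁻ x, F x = (∫⁻ x in unitBall d, F x) +
      ∑' j : ℕ, ∫⁻ x in annulus d ((j:ℤ)+1), F x := by
    rw [← lintegral_add_compl F hball, compl_ball_eq, lintegral_iUnion hann (annulus_disjoint d)]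
  rw [hsplit]
  set S := BStarNorm d f
  have hb0 : ∫⁻ x in unitBall d, F x ≤ S * eLpNorm g 2 (volume.restrict (unitBall d)) :=
    (cs _ f g hf hg).trans (mul_le_mul_left (le_max_left _ _) _)
  have hbj : ∀ j : ℕ, ∫⁻ x in annulus d ((j:ℤ)+1), F x ≤
      S * ((2 : ENNReal) ^ (((j : ℝ) + 1) / 2) *
        eLpNorm g 2 (volume.restrict (annulus d ((j : ℤ) + 1)))) := by
    intro j
    set r : ℝ := ((j : ℝ) + 1) / 2
    set Fj := eLpNorm f 2 (volume.restrict (annulus d ((j : ℤ) + 1)))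
    set Gj := eLpNorm g 2 (volume.restrict (annulus d ((j : ℤ) + 1)))
    have hsup : (2 : ENNReal) ^ (-r) * Fj ≤ S :=
      le_trans (le_iSup (fun j : ℕ => (2 : ENNReal) ^ (-(((j : ℝ) + 1) / 2)) *
        eLpNorm f 2 (volume.restrict (annulus d ((j : ℤ) + 1)))) j) (le_max_right _ _)
    have hFj : Fj ≤ (2 : ENNReal) ^ r * S := by
      have : (2 : ENNReal) ^ r * ((2 : ENNReal) ^ (-r) * Fj) = Fj := by
        rw [← mul_assoc, ← ENNReal.rpow_add _ _ two_ne_zero ENNReal.ofNat_ne_top,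
          add_neg_cancel, ENNReal.rpow_zero, one_mul]
      calc Fj = (2 : ENNReal) ^ r * ((2 : ENNReal) ^ (-r) * Fj) := this.symm
        _ ≤ (2 : ENNReal) ^ r * S := mul_le_mul_right hsup _
    calc ∫⁻ x in annulus d ((j:ℤ)+1), F x ≤ Fj * Gj := cs _ f g hf hg
      _ ≤ ((2 : ENNReal) ^ r * S) * Gj := mul_le_mul_left hFj _
      _ = S * ((2 : ENNReal) ^ r * Gj) := by ring
  calc (∫⁻ x in unitBall d, F x) + ∑' j : ℕ, ∫⁻ x in annulus d ((j:ℤ)+1), F x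
      ≤ S * eLpNorm g 2 (volume.restrict (unitBall d)) +
        ∑' j : ℕ, S * ((2 : ENNReal) ^ (((j : ℝ) + 1) / 2) *
          eLpNorm g 2 (volume.restrict (annulus d ((j : ℤ) + 1)))) :=
        add_le_add hb0 (ENNReal.tsum_le_tsum hbj)
    _ = S * BNorm d g := by rw [ENNReal.tsum_mul_left, ← mul_add]; rfl
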